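/- Stage-2 residual Z error (Lemma 3): Let H ∈ 𝔽₂^{m×n} and A ∈ 𝔽₂^{a×n} with H·Aᵀ = 0, and assume H is (t,f)-confined relative to A with f : ℕ → ℝ monotone increasing. Let T ≥ 1 and let e¹,…,e^T ∈ 𝔽₂ⁿ and s_e¹,…,s_e^T ∈ 𝔽₂^m satisfy ‖e^τ‖_A ≤ t/4 and f(2|s_e^τ|) ≤ t/4 for every τ. Define ē¹ = e¹ and, for τ = 1,…,T: let ŝ^τ ∈ 𝔽₂^m be any vector of minimum Hamming weight among those for which there exists e′ ∈ 𝔽₂ⁿ with ‖e′‖_A ≤ t/2 and He′ = Hē^τ + s_e^τ + ŝ^τ; let ê^τ ∈ 𝔽₂ⁿ be any vector of minimum Hamming weight with Hê^τ = Hē^τ + s_e^τ + ŝ^τ; and for τ < T set ē^{τ+1} = e^{τ+1} + ē^τ + ê^τ. Then the final residual error satisfies ‖ē^T + ê^T‖_A ≤ t/4. -/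

import Mathlib

open Matrix Kronecker

/-- The row space of a matrix over 𝔽₂: the span of its rows. -/
def rowSpace {m n : Type*} (A : Matrix m n (ZMod 2)) :
    Submodule (ZMod 2) (n → ZMod 2) :=
  Submodule.span (ZMod 2) (Set.range A)

/-- The reduced weight of a vector `v` relative to a matrix `A`:
`‖v‖_A = min { |v+u| : u ∈ rs(A) }`. -/
noncomputable def redW {m n : Type*} [Fintype n] (A : Matrix m n (ZMod 2))
    (v : n → ZMod 2) : ℕ :=
  sInf {k | ∃ u ∈ rowSpace A, hammingNorm (v + u) = k}

/-- `H` is `(t,f)`-sound relative to `A`. -/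
def Sound {m n a : Type*} [Fintype m] [Fintype n] (t : ℕ) (f : ℕ → ℝ)
    (H : Matrix m n (ZMod 2)) (A : Matrix a n (ZMod 2)) : Prop :=
  ∀ s : m → ZMod 2, (∃ e, H.mulVec e = s) → hammingNorm s ≤ t →
    ∃ e, H.mulVec e = s ∧ (redW A e : ℝ) ≤ f (hammingNorm s)

/-- `H` is `(t,f)`-confined relative to `A`. -/
def Confined {m n a : Type*} [Fintype m] [Fintype n] (t : ℕ) (f : ℕ → ℝ)
    (H : Matrix m n (ZMod 2)) (A : Matrix a n (ZMod 2)) : Prop :=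
  ∀ e : n → ZMod 2, redW A e ≤ t → (redW A e : ℝ) ≤ f (hammingNorm (H.mulVec e))

/-- Parity-check matrix of the length-`ℓ` repetition code. -/
def repH (ℓ : ℕ) : Matrix (Fin (ℓ - 1)) (Fin ℓ) (ZMod 2) :=
  Matrix.of fun j i => if i.val = j.val ∨ i.val = j.val + 1 then 1 else 0

/-- Thickened X-check matrix `H̃_X = ( H_X⊗I_ℓ | I_{m_X}⊗hᵀ )`. -/
def thickHX {mX n : ℕ} (HX : Matrix (Fin mX) (Fin n) (ZMod 2)) (ℓ : ℕ) :
    Matrix (Fin mX × Fin ℓ) ((Fin n × Fin ℓ) ⊕ (Fin mX × Fin (ℓ - 1))) (ZMod 2) :=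
  Matrix.fromCols (HX ⊗ₖ (1 : Matrix (Fin ℓ) (Fin ℓ) (ZMod 2)))
    ((1 : Matrix (Fin mX) (Fin mX) (ZMod 2)) ⊗ₖ (repH ℓ)ᵀ)

/-- Thickened Z-check matrix `H̃_Z = [[ H_Z⊗I_ℓ , 0 ],[ I_n⊗h , H_Xᵀ⊗I_{ℓ−1} ]]`. -/
def thickHZ {mX mZ n : ℕ} (HX : Matrix (Fin mX) (Fin n) (ZMod 2))
    (HZ : Matrix (Fin mZ) (Fin n) (ZMod 2)) (ℓ : ℕ) :
    Matrix ((Fin mZ × Fin ℓ) ⊕ (Fin n × Fin (ℓ - 1)))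
      ((Fin n × Fin ℓ) ⊕ (Fin mX × Fin (ℓ - 1))) (ZMod 2) :=
  Matrix.fromBlocks (HZ ⊗ₖ (1 : Matrix (Fin ℓ) (Fin ℓ) (ZMod 2))) 0
    ((1 : Matrix (Fin n) (Fin n) (ZMod 2)) ⊗ₖ repH ℓ)
    (HXᵀ ⊗ₖ (1 : Matrix (Fin (ℓ - 1)) (Fin (ℓ - 1)) (ZMod 2)))

/-- Metacheck matrix `M̃_Z = ( I_{m_Z}⊗h | H_Z⊗I_{ℓ−1} )`. -/
def metaMZ {mZ n : ℕ} (HZ : Matrix (Fin mZ) (Fin n) (ZMod 2)) (ℓ : ℕ) :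
    Matrix (Fin mZ × Fin (ℓ - 1))
      ((Fin mZ × Fin ℓ) ⊕ (Fin n × Fin (ℓ - 1))) (ZMod 2) :=
  Matrix.fromCols ((1 : Matrix (Fin mZ) (Fin mZ) (ZMod 2)) ⊗ₖ repH ℓ)
    (HZ ⊗ₖ (1 : Matrix (Fin (ℓ - 1)) (Fin (ℓ - 1)) (ZMod 2)))

/-- Sheet-`τ` component of a vector on the thickened qubit space. -/
def sheet {n ℓ mX : ℕ} (τ : Fin ℓ)
    (v : (Fin n × Fin ℓ) ⊕ (Fin mX × Fin (ℓ - 1)) → ZMod 2) : Fin n → ZMod 2 :=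
  fun i => v (Sum.inl (i, τ))

/-!
Each round keeps the invariant `‖ē^τ‖_A ≤ t/2`. Under it, `s_e^τ` itself is an admissible syndrome
correction (take `e' = ē^τ`), so `|ŝ^τ| ≤ |s_e^τ|`; and a minimum-weight solution `ê^τ` weighs no
more than the reduced weight of any solution, so `|ê^τ| ≤ t/2`. Hence the residual `ē^τ + ê^τ`
has reduced weight at most `t` and syndrome `s_e^τ + ŝ^τ` of weight at most `2|s_e^τ|`, and
confinement bounds its reduced weight by `f(2|s_e^τ|) ≤ t/4`. Adding the fresh error `e^{τ+1}`
of reduced weight `≤ t/4` restores the invariant.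
-/

theorem hammingNorm_add_le {ι : Type*} {β : ι → Type*} [Fintype ι] [∀ i, AddZeroClass (β i)]
    [∀ i, DecidableEq (β i)] (x y : ∀ i, β i) :
    hammingNorm (x + y) ≤ hammingNorm x + hammingNorm y := by
  classical
  refine (Finset.card_le_card fun i hi => ?_).trans (Finset.card_union_le _ _)
  simp only [Finset.mem_union, Finset.mem_filter, Finset.mem_univ, true_and, Pi.add_apply] at hi ⊢
  by_contra! h
  simp [h.1, h.2] at hi

theorem ZMod.pi_two_add_self {ι : Type*} (v : ι → ZMod 2) : v + v = 0 :=
  funext fun i => CharTwo.add_self_eq_zero (v i)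

section ReducedWeight

variable {m n : Type*} [Fintype n] (A : Matrix m n (ZMod 2))

theorem redW_le_hammingNorm_add {v u : n → ZMod 2} (hu : u ∈ rowSpace A) :
    redW A v ≤ hammingNorm (v + u) :=
  Nat.sInf_le ⟨u, hu, rfl⟩

theorem redW_le_hammingNorm (v : n → ZMod 2) : redW A v ≤ hammingNorm v := by
  simpa using redW_le_hammingNorm_add A (v := v) (rowSpace A).zero_mem

theorem exists_hammingNorm_add_eq_redW (v : n → ZMod 2) :
    ∃ u ∈ rowSpace A, hammingNorm (v + u) = redW A v :=
  Nat.sInf_mem (s := {k | ∃ u ∈ rowSpace A, hammingNorm (v + u) = k})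
    ⟨hammingNorm v, 0, (rowSpace A).zero_mem, by simp⟩

theorem redW_add_le (v w : n → ZMod 2) : redW A (v + w) ≤ redW A v + redW A w := by
  obtain ⟨u, hu, hvu⟩ := exists_hammingNorm_add_eq_redW A v
  obtain ⟨u', hu', hwu'⟩ := exists_hammingNorm_add_eq_redW A w
  calc redW A (v + w) ≤ hammingNorm (v + w + (u + u')) :=
        redW_le_hammingNorm_add A ((rowSpace A).add_mem hu hu')
    _ = hammingNorm ((v + u) + (w + u')) := by abel_nf
    _ ≤ redW A v + redW A w := hvu ▸ hwu' ▸ hammingNorm_add_le _ _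

variable {k : Type*} {H : Matrix k n (ZMod 2)}

theorem mulVec_eq_zero_of_mem_rowSpace (hHA : H * Aᵀ = 0) {u : n → ZMod 2}
    (hu : u ∈ rowSpace A) : H *ᵥ u = 0 := by
  suffices rowSpace A ≤ LinearMap.ker H.mulVecLin from this hu
  refine Submodule.span_le.2 ?_
  rintro _ ⟨j, rfl⟩
  ext i
  simpa [Matrix.mul_apply, Matrix.mulVec, dotProduct] using congrFun (congrFun hHA i) j

/-- `H` annihilates `rs(A)`, so the lightest representative of `y + rs(A)` is a competitor of `x`. -/
theorem hammingNorm_le_redW_of_minimal (hHA : H * Aᵀ = 0) {x y : n → ZMod 2} {s : k → ZMod 2}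
    (hx : ∀ e, H *ᵥ e = s → hammingNorm x ≤ hammingNorm e) (hy : H *ᵥ y = s) :
    hammingNorm x ≤ redW A y := by
  obtain ⟨u, hu, hyu⟩ := exists_hammingNorm_add_eq_redW A y
  refine hyu ▸ hx _ ?_
  rw [mulVec_add, mulVec_eq_zero_of_mem_rowSpace A hHA hu, add_zero, hy]

end ReducedWeight

theorem Confined.redW_le_of_hammingNorm_mulVec_le {m n a : Type*} [Fintype m] [Fintype n]
    {t : ℕ} {f : ℕ → ℝ} {H : Matrix m n (ZMod 2)} {A : Matrix a n (ZMod 2)}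
    (hconf : Confined t f H A) (hf : Monotone f) {e : n → ZMod 2} (he : redW A e ≤ t) {k : ℕ}
    (hk : hammingNorm (H *ᵥ e) ≤ k) : (redW A e : ℝ) ≤ f k :=
  (hconf e he).trans (hf hk)

theorem redW_residual_le {m n a : Type*} [Fintype m] [Fintype n]
    {t : ℕ} {f : ℕ → ℝ} {H : Matrix m n (ZMod 2)} {A : Matrix a n (ZMod 2)}
    (hHA : H * Aᵀ = 0) (hf : Monotone f) (hconf : Confined t f H A)
    {ē ê : n → ZMod 2} {s ŝ : m → ZMod 2}
    (hē : (redW A ē : ℝ) ≤ t / 2) (hs : f (2 * hammingNorm s) ≤ t / 4)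
    (hŝ : ∃ e', (redW A e' : ℝ) ≤ t / 2 ∧ H *ᵥ e' = H *ᵥ ē + s + ŝ)
    (hŝ_min : ∀ s', (∃ e', (redW A e' : ℝ) ≤ t / 2 ∧ H *ᵥ e' = H *ᵥ ē + s + s') →
      hammingNorm ŝ ≤ hammingNorm s')
    (hê : H *ᵥ ê = H *ᵥ ē + s + ŝ)
    (hê_min : ∀ e', H *ᵥ e' = H *ᵥ ē + s + ŝ → hammingNorm ê ≤ hammingNorm e') :
    (redW A (ē + ê) : ℝ) ≤ t / 4 := by
  have hŝ_le : hammingNorm ŝ ≤ hammingNorm s :=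
    hŝ_min s ⟨ē, hē, by rw [add_assoc, ZMod.pi_two_add_self, add_zero]⟩
  have hê_le : (hammingNorm ê : ℝ) ≤ t / 2 := by
    obtain ⟨e₀, he₀, hs₀⟩ := hŝ
    exact le_trans (by exact_mod_cast hammingNorm_le_redW_of_minimal A hHA hê_min hs₀) he₀
  have hsyn : H *ᵥ (ē + ê) = s + ŝ := by
    rw [mulVec_add, hê, ← add_assoc, ← add_assoc, ZMod.pi_two_add_self, zero_add]
  have hres : redW A (ē + ê) ≤ t := by
    have : (redW A (ē + ê) : ℝ) ≤ redW A ē + hammingNorm ê := by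
      exact_mod_cast (redW_add_le A ē ê).trans (Nat.add_le_add_left (redW_le_hammingNorm A ê) _)
    exact_mod_cast this.trans (show _ ≤ (t : ℝ) by linarith)
  refine (hconf.redW_le_of_hammingNorm_mulVec_le hf hres ?_).trans hs
  rw [hsyn, two_mul]
  exact (hammingNorm_add_le s ŝ).trans (Nat.add_le_add_left hŝ_le _)

theorem stage2_residual_Z_error_general
    {m n a : ℕ}
    (H : Matrix (Fin m) (Fin n) (ZMod 2))
    (A : Matrix (Fin a) (Fin n) (ZMod 2))
    (hHA : H * Aᵀ = 0)
    (t : ℕ) (f : ℕ → ℝ) (hf : Monotone f)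
    (hconf : Confined t f H A)
    (T : ℕ) (hT : 1 ≤ T)
    (e ebar ehat : ℕ → Fin n → ZMod 2) (se shat : ℕ → Fin m → ZMod 2)
    (he : ∀ τ < T, (redW A (e τ) : ℝ) ≤ (t : ℝ) / 4)
    (hse : ∀ τ < T, f (2 * hammingNorm (se τ)) ≤ (t : ℝ) / 4)
    (hebar0 : ebar 0 = e 0)
    (hshat : ∀ τ < T,
      (∃ e', (redW A e' : ℝ) ≤ (t : ℝ) / 2 ∧
        H.mulVec e' = H.mulVec (ebar τ) + se τ + shat τ) ∧
      (∀ s' : Fin m → ZMod 2,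
        (∃ e', (redW A e' : ℝ) ≤ (t : ℝ) / 2 ∧
          H.mulVec e' = H.mulVec (ebar τ) + se τ + s') →
        hammingNorm (shat τ) ≤ hammingNorm s'))
    (hehat : ∀ τ < T,
      H.mulVec (ehat τ) = H.mulVec (ebar τ) + se τ + shat τ ∧
      (∀ e' : Fin n → ZMod 2,
        H.mulVec e' = H.mulVec (ebar τ) + se τ + shat τ →
        hammingNorm (ehat τ) ≤ hammingNorm e'))
    (hrec : ∀ τ, τ + 1 < T → ebar (τ + 1) = e (τ + 1) + ebar τ + ehat τ) :
    (redW A (ebar (T - 1) + ehat (T - 1)) : ℝ) ≤ (t : ℝ) / 4 := by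
  have residual : ∀ τ < T, (redW A (ebar τ) : ℝ) ≤ t / 2 →
      (redW A (ebar τ + ehat τ) : ℝ) ≤ t / 4 := fun τ hτ hbar =>
    redW_residual_le hHA hf hconf hbar (hse τ hτ) (hshat τ hτ).1 (hshat τ hτ).2
      (hehat τ hτ).1 (hehat τ hτ).2
  have invariant : ∀ τ < T, (redW A (ebar τ) : ℝ) ≤ t / 2 := by
    intro τ hτ
    induction τ with
    | zero => linarith [hebar0 ▸ he 0 hτ, (Nat.cast_nonneg t : (0 : ℝ) ≤ t)]
    | succ τ ih =>
      have hτ' : τ < T := by omega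
      have hsum : (redW A (ebar (τ + 1)) : ℝ) ≤
          redW A (e (τ + 1)) + redW A (ebar τ + ehat τ) := by
        rw [hrec τ hτ, add_assoc]
        exact_mod_cast redW_add_le A _ _
      linarith [he (τ + 1) hτ, residual τ hτ' (ih hτ')]
  exact residual (T - 1) (by omega) (invariant (T - 1) (by omega))

theorem stage2_residual_Z_error
    {m n a : ℕ}
    (H : Matrix (Fin m) (Fin n) (ZMod 2))
    (A : Matrix (Fin a) (Fin n) (ZMod 2))
    (hHA : H * Aᵀ = 0)
    (t : ℕ) (ht : 0 < t) (f : ℕ → ℝ) (hf : Monotone f)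
    (hconf : Confined t f H A)
    (T : ℕ) (hT : 1 ≤ T)
    (e ebar ehat : ℕ → Fin n → ZMod 2) (se shat : ℕ → Fin m → ZMod 2)
    (he : ∀ τ < T, (redW A (e τ) : ℝ) ≤ (t : ℝ) / 4)
    (hse : ∀ τ < T, f (2 * hammingNorm (se τ)) ≤ (t : ℝ) / 4)
    (hebar0 : ebar 0 = e 0)
    (hshat : ∀ τ < T,
      (∃ e', (redW A e' : ℝ) ≤ (t : ℝ) / 2 ∧
        H.mulVec e' = H.mulVec (ebar τ) + se τ + shat τ) ∧
      (∀ s' : Fin m → ZMod 2,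
        (∃ e', (redW A e' : ℝ) ≤ (t : ℝ) / 2 ∧
          H.mulVec e' = H.mulVec (ebar τ) + se τ + s') →
        hammingNorm (shat τ) ≤ hammingNorm s'))
    (hehat : ∀ τ < T,
      H.mulVec (ehat τ) = H.mulVec (ebar τ) + se τ + shat τ ∧
      (∀ e' : Fin n → ZMod 2,
        H.mulVec e' = H.mulVec (ebar τ) + se τ + shat τ →
        hammingNorm (ehat τ) ≤ hammingNorm e'))
    (hrec : ∀ τ, τ + 1 < T → ebar (τ + 1) = e (τ + 1) + ebar τ + ehat τ) :
    (redW A (ebar (T - 1) + ehat (T - 1)) : ℝ) ≤ (t : ℝ) / 4 :=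
  stage2_residual_Z_error_general H A hHA t f hf hconf T hT e ebar ehat se shat he hse hebar0 hshat
    hehat hrec
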